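/- arXiv:2108.08152 — 4 statements merged into one kernel-verified Lean document; each statement's English description precedes it below -/
import Mathlib

section
/- Fix m ≥ 1, λ ∈ ℂ^m, f ∈ ℂ^m, a vector of rationals r ∈ ℚ^m, Ω > 0, ε ∈ ℝ, and for each i ∈ {1,…,m} a finite set S_i of pairs (l, j) of multi-indices in ℕ^m together with coefficients γ_i(l,j) ∈ ℂ, such that the resonance condition Σ_k (l_k − j_k) r_k = r_i holds for every (l,j) ∈ S_i. Suppose q* ∈ ℂ^m is an equilibrium of the autonomous slow-phase system, i.e. 0 = (λ_i − i r_i Ω) q*_i + Σ_{(l,j)∈S_i} γ_i(l,j) (q*)^l (conj q*)^j + ε f_i for all i, and let r_d ∈ ℚ, r_d > 0, be a common divisor of the r_i, i.e. r_i / r_d ∈ ℤ for all i. Then q(t) defined componentwise by q_i(t) = q*_i e^{i r_i Ω t} is a solution of the rotating system q̇_i = λ_i q_i + Σ_{(l,j)∈S_i} γ_i(l,j) q^l (conj q)^j + ε f_i e^{i r_i Ω t}, and q is periodic with period T = 2π/(r_d Ω), i.e. q(t + T) = q(t) for all t. -/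
/-- An equilibrium `q*` of the autonomous slow-phase system gives rise, via
`q_i(t) = q*_i e^{i r_i Ω t}`, to a solution of the rotating system which is
periodic with period `T = 2π/(r_d Ω)` for any common divisor `r_d` of the
rational numbers `r_i`. -/
theorem slow_equilibrium_gives_periodic_orbit
    (m : ℕ) (hm : 1 ≤ m)
    (lam f : Fin m → ℂ) (r : Fin m → ℚ) (Ω : ℝ) (hΩ : 0 < Ω) (ε : ℝ)
    (S : Fin m → Finset ((Fin m → ℕ) × (Fin m → ℕ)))
    (γ : Fin m → ((Fin m → ℕ) × (Fin m → ℕ)) → ℂ)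
    (hres : ∀ i : Fin m, ∀ p ∈ S i,
      (∑ k : Fin m, (((p.1 k : ℚ) - (p.2 k : ℚ)) * r k)) = r i)
    (qstar : Fin m → ℂ)
    (heq : ∀ i : Fin m,
      (0 : ℂ) = (lam i - Complex.I * ((r i : ℝ) : ℂ) * (Ω : ℂ)) * qstar i
        + ∑ p ∈ S i, γ i p * (∏ k : Fin m, qstar k ^ p.1 k)
            * (∏ k : Fin m, (starRingEnd ℂ) (qstar k) ^ p.2 k)
        + (ε : ℂ) * f i)
    (rd : ℚ) (hrd : 0 < rd)
    (hdiv : ∀ i : Fin m, ∃ z : ℤ, r i / rd = (z : ℚ)) :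
    (∀ (i : Fin m) (t : ℝ), HasDerivAt
        (fun s : ℝ => qstar i * Complex.exp (Complex.I * ((r i : ℝ) : ℂ) * (Ω : ℂ) * (s : ℂ)))
        (lam i * (qstar i * Complex.exp (Complex.I * ((r i : ℝ) : ℂ) * (Ω : ℂ) * (t : ℂ)))
          + ∑ p ∈ S i, γ i p
              * (∏ k : Fin m,
                  (qstar k * Complex.exp (Complex.I * ((r k : ℝ) : ℂ) * (Ω : ℂ) * (t : ℂ))) ^ p.1 k)
              * (∏ k : Fin m,
                  (starRingEnd ℂ)
                    (qstar k * Complex.exp (Complex.I * ((r k : ℝ) : ℂ) * (Ω : ℂ) * (t : ℂ))) ^ p.2 k)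
          + (ε : ℂ) * f i * Complex.exp (Complex.I * ((r i : ℝ) : ℂ) * (Ω : ℂ) * (t : ℂ))) t)
    ∧
    (∀ (t : ℝ) (i : Fin m),
      qstar i * Complex.exp
        (Complex.I * ((r i : ℝ) : ℂ) * (Ω : ℂ) * ((t + 2 * Real.pi / ((rd : ℝ) * Ω) : ℝ) : ℂ))
      = qstar i * Complex.exp (Complex.I * ((r i : ℝ) : ℂ) * (Ω : ℂ) * (t : ℂ))) := by
  constructor
  · intro i t
    set c : ℂ := Complex.I * ((r i : ℝ) : ℂ) * (Ω : ℂ) with hc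
    have hd : HasDerivAt (fun s : ℝ => c * (s : ℂ)) c t := by
      simpa using (Complex.ofRealCLM.hasDerivAt (x := t)).const_mul c
    have h3 := (hd.cexp).const_mul (qstar i)
    convert h3 using 1
    case e'_4 => rfl
    set E : ℂ := Complex.exp (c * t) with hE
    have hstar : lam i * qstar i
        + (∑ p ∈ S i, γ i p * (∏ k : Fin m, qstar k ^ p.1 k)
            * (∏ k : Fin m, (starRingEnd ℂ) (qstar k) ^ p.2 k))
        + (ε : ℂ) * f i = c * qstar i := by
      linear_combination -(heq i)
    have hconj : ∀ k : Fin m,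
        (starRingEnd ℂ) (Complex.exp (Complex.I * ((r k : ℝ) : ℂ) * (Ω : ℂ) * (t : ℂ)))
          = Complex.exp (-(Complex.I * ((r k : ℝ) : ℂ) * (Ω : ℂ) * (t : ℂ))) := by
      intro k
      rw [← Complex.exp_conj]
      congr 1
      simp [map_mul, Complex.conj_I, Complex.conj_ofReal]
    have hprod : ∀ p ∈ S i,
        (∏ k : Fin m,
            (qstar k * Complex.exp (Complex.I * ((r k : ℝ) : ℂ) * (Ω : ℂ) * (t : ℂ))) ^ p.1 k)
        * (∏ k : Fin m,
            (starRingEnd ℂ)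
              (qstar k * Complex.exp (Complex.I * ((r k : ℝ) : ℂ) * (Ω : ℂ) * (t : ℂ))) ^ p.2 k)
        = (∏ k : Fin m, qstar k ^ p.1 k)
          * (∏ k : Fin m, (starRingEnd ℂ) (qstar k) ^ p.2 k) * E := by
      intro p hp
      have hexp : (∏ k : Fin m,
            Complex.exp (Complex.I * ((r k : ℝ) : ℂ) * (Ω : ℂ) * (t : ℂ)) ^ p.1 k)
          * (∏ k : Fin m,
            Complex.exp (-(Complex.I * ((r k : ℝ) : ℂ) * (Ω : ℂ) * (t : ℂ))) ^ p.2 k) = E := by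
        simp_rw [← Complex.exp_nat_mul, ← Complex.exp_sum, ← Complex.exp_add]
        congr 1
        have hrC : (∑ k : Fin m, (((p.1 k : ℂ)) - (p.2 k : ℂ)) * ((r k : ℝ) : ℂ))
            = ((r i : ℝ) : ℂ) := by
          have := hres i p hp
          push_cast
          exact_mod_cast this
        calc (∑ k : Fin m, (p.1 k : ℂ) * (Complex.I * ((r k : ℝ) : ℂ) * (Ω : ℂ) * (t : ℂ)))
              + ∑ k : Fin m, (p.2 k : ℂ) * -(Complex.I * ((r k : ℝ) : ℂ) * (Ω : ℂ) * (t : ℂ))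
            = (∑ k : Fin m, (((p.1 k : ℂ)) - (p.2 k : ℂ)) * ((r k : ℝ) : ℂ))
              * (Complex.I * (Ω : ℂ) * (t : ℂ)) := by
              rw [← Finset.sum_add_distrib, Finset.sum_mul]
              refine Finset.sum_congr rfl fun k _ => by ring
          _ = c * t := by rw [hrC, hc]; ring
      calc (∏ k : Fin m,
            (qstar k * Complex.exp (Complex.I * ((r k : ℝ) : ℂ) * (Ω : ℂ) * (t : ℂ))) ^ p.1 k)
        * (∏ k : Fin m,
            (starRingEnd ℂ)
              (qstar k * Complex.exp (Complex.I * ((r k : ℝ) : ℂ) * (Ω : ℂ) * (t : ℂ))) ^ p.2 k)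
          = ((∏ k : Fin m, qstar k ^ p.1 k)
              * (∏ k : Fin m,
                  Complex.exp (Complex.I * ((r k : ℝ) : ℂ) * (Ω : ℂ) * (t : ℂ)) ^ p.1 k))
            * ((∏ k : Fin m, (starRingEnd ℂ) (qstar k) ^ p.2 k)
              * (∏ k : Fin m,
                  Complex.exp (-(Complex.I * ((r k : ℝ) : ℂ) * (Ω : ℂ) * (t : ℂ))) ^ p.2 k)) := by
            simp_rw [map_mul, hconj, mul_pow, Finset.prod_mul_distrib]
        _ = (∏ k : Fin m, qstar k ^ p.1 k)
              * (∏ k : Fin m, (starRingEnd ℂ) (qstar k) ^ p.2 k)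
              * ((∏ k : Fin m,
                  Complex.exp (Complex.I * ((r k : ℝ) : ℂ) * (Ω : ℂ) * (t : ℂ)) ^ p.1 k)
                * (∏ k : Fin m,
                  Complex.exp (-(Complex.I * ((r k : ℝ) : ℂ) * (Ω : ℂ) * (t : ℂ))) ^ p.2 k)) := by
            ring
        _ = (∏ k : Fin m, qstar k ^ p.1 k)
              * (∏ k : Fin m, (starRingEnd ℂ) (qstar k) ^ p.2 k) * E := by rw [hexp]
    have hsum : (∑ p ∈ S i, γ i p
          * (∏ k : Fin m,
              (qstar k * Complex.exp (Complex.I * ((r k : ℝ) : ℂ) * (Ω : ℂ) * (t : ℂ))) ^ p.1 k)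
          * (∏ k : Fin m,
              (starRingEnd ℂ)
                (qstar k * Complex.exp (Complex.I * ((r k : ℝ) : ℂ) * (Ω : ℂ) * (t : ℂ))) ^ p.2 k))
        = (∑ p ∈ S i, γ i p * (∏ k : Fin m, qstar k ^ p.1 k)
            * (∏ k : Fin m, (starRingEnd ℂ) (qstar k) ^ p.2 k)) * E := by
      rw [Finset.sum_mul]
      refine Finset.sum_congr rfl fun p hp => ?_
      rw [mul_assoc, hprod p hp]; ring
    rw [hsum]
    linear_combination E * hstar
  · intro t i
    obtain ⟨z, hz⟩ := hdiv i
    have hrdne : (rd : ℚ) ≠ 0 := ne_of_gt hrd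
    have hri : (r i : ℚ) = z * rd := by
      field_simp at hz; linarith [hz]
    have hriR : ((r i : ℝ)) = (z : ℝ) * (rd : ℝ) := by exact_mod_cast hri
    have hΩne : (Ω : ℝ) ≠ 0 := ne_of_gt hΩ
    have hrdRne : ((rd : ℝ)) ≠ 0 := by exact_mod_cast hrdne
    have harg : Complex.I * ((r i : ℝ) : ℂ) * (Ω : ℂ)
          * ((t + 2 * Real.pi / ((rd : ℝ) * Ω) : ℝ) : ℂ)
        = Complex.I * ((r i : ℝ) : ℂ) * (Ω : ℂ) * (t : ℂ)
          + (z : ℂ) * (2 * (Real.pi : ℂ) * Complex.I) := by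
      have h2 : ((r i : ℚ) : ℂ) = (z : ℂ) * ((rd : ℚ) : ℂ) := by exact_mod_cast hri
      push_cast
      rw [h2]
      have hΩC : ((Ω : ℝ) : ℂ) ≠ 0 := by exact_mod_cast hΩne
      have hrdC : ((rd : ℚ) : ℂ) ≠ 0 := by exact_mod_cast hrdne
      field_simp
    rw [harg, Complex.exp_add, Complex.exp_int_mul_two_pi_mul_I, mul_one]
end

section
/- For every n, the set of n × n complex matrices all of whose eigenvalues have strictly negative real part is an open subset of the space of n × n complex matrices; that is, {A ∈ Matrix(n,n,ℂ) : ∀ z ∈ spectrum(A), Re z < 0} is open. Consequently, linearized asymptotic stability of an equilibrium persists under sufficiently small perturbations of the Jacobian matrix. -/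
section Aux

attribute [local instance] Matrix.linftyOpNormedRing Matrix.linftyOpNormedAlgebra

private theorem isOpen_hurwitz_aux (n : ℕ) (hn : 0 < n) :
    IsOpen {A : Matrix (Fin n) (Fin n) ℂ | ∀ z ∈ spectrum ℂ A, z.re < 0} := by
  haveI : Nonempty (Fin n) := Fin.pos_iff_nonempty.mp hn
  haveI : CompleteSpace (Matrix (Fin n) (Fin n) ℂ) := FiniteDimensional.complete ℂ _
  rw [isOpen_iff_mem_nhds]
  intro A hA
  set R : ℝ := ‖A‖ + 1 with hR
  set K : Set ℂ := {z | 0 ≤ z.re ∧ ‖z‖ ≤ R} with hK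
  have hKc : IsCompact K := by
    apply Metric.isCompact_of_isClosed_isBounded
    · exact (isClosed_le continuous_const Complex.continuous_re).inter
        (isClosed_le continuous_norm continuous_const)
    · exact (Metric.isBounded_closedBall (x := (0:ℂ)) (r := R)).subset
        (fun z hz => by simpa [Metric.mem_closedBall, Complex.dist_eq] using hz.2)
  have hU : IsOpen {p : ℂ × Matrix (Fin n) (Fin n) ℂ |
      IsUnit (algebraMap ℂ (Matrix (Fin n) (Fin n) ℂ) p.1 - p.2)} := by
    apply Units.isOpen.preimage
    exact ((algebraMapCLM ℂ (Matrix (Fin n) (Fin n) ℂ)).continuous.comp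
      continuous_fst).sub continuous_snd
  have hsub : K ×ˢ ({A} : Set (Matrix (Fin n) (Fin n) ℂ)) ⊆
      {p : ℂ × Matrix (Fin n) (Fin n) ℂ |
        IsUnit (algebraMap ℂ (Matrix (Fin n) (Fin n) ℂ) p.1 - p.2)} := by
    rintro ⟨z, B⟩ ⟨hz, hB⟩
    rcases hB with rfl
    by_contra h
    exact absurd (hA z (spectrum.mem_iff.mpr h)) (not_lt.mpr hz.1)
  obtain ⟨V, W, hV, hW, hKV, hAW, hVW⟩ := generalized_tube_lemma hKc isCompact_singleton hU hsub
  have hAball : A ∈ Metric.ball A 1 := Metric.mem_ball_self one_pos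
  refine Filter.mem_of_superset
    ((hW.inter Metric.isOpen_ball).mem_nhds ⟨hAW rfl, hAball⟩) ?_
  rintro B ⟨hBW, hBball⟩ z hz
  by_contra h
  push_neg at h
  have hnorm : ‖z‖ ≤ R := by
    have h1 : ‖z‖ ≤ ‖B‖ := spectrum.norm_le_norm_of_mem hz
    have h2 : ‖B‖ ≤ ‖A‖ + ‖B - A‖ := by
      calc ‖B‖ = ‖A + (B - A)‖ := by rw [add_sub_cancel]
        _ ≤ ‖A‖ + ‖B - A‖ := norm_add_le _ _
    have h3 : ‖B - A‖ < 1 := by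
      simpa [dist_eq_norm] using hBball
    linarith
  have hzK : z ∈ K := ⟨h, hnorm⟩
  exact spectrum.mem_iff.mp hz (hVW (Set.mk_mem_prod (hKV hzK) hBW))

end Aux

/-- The set of `n × n` complex matrices all of whose eigenvalues have strictly negative
real part is open: linearized asymptotic stability persists under small perturbations. -/
theorem isOpen_hurwitz_stable_matrices (n : ℕ) :
    IsOpen {A : Matrix (Fin n) (Fin n) ℂ | ∀ z ∈ spectrum ℂ A, z.re < 0} := by
  rcases Nat.eq_zero_or_pos n with rfl | hn
  · have : {A : Matrix (Fin 0) (Fin 0) ℂ | ∀ z ∈ spectrum ℂ A, z.re < 0} = Set.univ := by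
      refine Set.eq_univ_of_forall fun A z hz => ?_
      exact absurd (isUnit_of_subsingleton _) (spectrum.mem_iff.mp hz)
    rw [this]; exact isOpen_univ
  · exact isOpen_hurwitz_aux n hn
end

section
/- Let a < b be real numbers and let A : [a,b] → Matrix(n,n,ℂ) be a continuous family of n × n complex matrices. Suppose every eigenvalue of A(a) has modulus strictly less than 1, while A(b) has at least one eigenvalue of modulus strictly greater than 1. Then there exist t ∈ [a,b] and an eigenvalue z ∈ spectrum(A(t)) with |z| = 1; that is, along a continuous path of Jacobian matrices that passes from linearized stability to instability, some eigenvalue must cross the unit circle of the complex plane. -/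
open Polynomial NNReal

lemma eval_charpoly_eq {n : ℕ} (M : Matrix (Fin n) (Fin n) ℂ) (z : ℂ) :
    (M.charpoly).eval z = (Matrix.scalar (Fin n) z - M).det := by
  rw [Matrix.charpoly, eval_det, Matrix.matPolyEquiv_charmatrix]
  simp

lemma mem_spectrum_iff_root {n : ℕ} (M : Matrix (Fin n) (Fin n) ℂ) (z : ℂ) :
    z ∈ spectrum ℂ M ↔ (M.charpoly).eval z = 0 := by
  rw [spectrum.mem_iff, eval_charpoly_eq, Matrix.isUnit_iff_isUnit_det, isUnit_iff_ne_zero,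
    not_not]
  rfl

lemma exists_spectrum_near {n : ℕ} (M : Matrix (Fin n) (Fin n) ℂ) (z0 : ℂ) (ε : ℝ≥0)
    (h : ‖(M.charpoly).eval z0‖₊ < ε ^ n) :
    ∃ z ∈ spectrum ℂ M, ‖z0 - z‖₊ < ε := by
  by_contra hc
  push_neg at hc
  have hsp : M.charpoly.Splits := IsAlgClosed.splits M.charpoly
  have hmon := M.charpoly_monic
  have hcard : M.charpoly.roots.card = n := by
    rw [(Polynomial.splits_iff_card_roots).mp hsp, Matrix.charpoly_natDegree_eq_dim,
      Fintype.card_fin]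
  have heval : (M.charpoly).eval z0 = (M.charpoly.roots.map (fun w => z0 - w)).prod := by
    conv_lhs => rw [hsp.eq_prod_roots_of_monic hmon]
    rw [Polynomial.eval_multiset_prod, Multiset.map_map]
    simp
  have hnorm : ‖(M.charpoly).eval z0‖₊
      = ((M.charpoly.roots.map (fun w => z0 - w)).map (‖·‖₊)).prod := by
    rw [heval]
    exact map_multiset_prod (nnnormHom.toMonoidHom : ℂ →* ℝ≥0) _
  have hge : ε ^ n ≤ ‖(M.charpoly).eval z0‖₊ := by
    rw [hnorm]
    have := Multiset.pow_card_le_prod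
      (s := (M.charpoly.roots.map (fun w => z0 - w)).map (‖·‖₊)) (a := ε) ?_
    · simpa [hcard] using this
    · intro x hx
      simp only [Multiset.mem_map] at hx
      obtain ⟨y, ⟨w, hw, rfl⟩, rfl⟩ := hx
      exact hc w ((mem_spectrum_iff_root M w).mpr (Polynomial.isRoot_of_mem_roots hw))
  exact absurd h (not_lt.mpr hge)

lemma spectrum_norm_le {n : ℕ} (M : Matrix (Fin n) (Fin n) ℂ) {z : ℂ} (hz : z ∈ spectrum ℂ M)
    (C : ℝ) (hC : ∀ i j, ‖M i j‖ ≤ C) : ‖z‖ ≤ n * C := by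
  have h1 : z ∈ spectrum ℂ (Matrix.toLinAlgEquiv' M) := by
    rwa [AlgEquiv.spectrum_eq]
  have h2 : Module.End.HasEigenvalue (Matrix.toLin' M) z := by
    have := Module.End.hasEigenvalue_iff_mem_spectrum.mpr h1
    exact this
  obtain ⟨k, hk⟩ := eigenvalue_mem_ball h2
  have hle : ‖z‖ ≤ ‖M k k‖ + ∑ j ∈ Finset.univ.erase k, ‖M k j‖ := by
    calc ‖z‖ ≤ ‖z - M k k‖ + ‖M k k‖ := by
            simpa using norm_add_le (z - M k k) (M k k)
      _ ≤ _ := by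
          rw [add_comm]
          gcongr
          simpa [dist_eq_norm] using Metric.mem_closedBall.mp hk
  have hsum : ‖M k k‖ + ∑ j ∈ Finset.univ.erase k, ‖M k j‖ = ∑ j, ‖M k j‖ := by
    rw [add_comm, Finset.sum_erase_add _ _ (Finset.mem_univ k)]
  refine hle.trans ?_
  rw [hsum]
  calc ∑ j, ‖M k j‖ ≤ ∑ _j : Fin n, C := Finset.sum_le_sum fun j _ => hC k j
    _ = n * C := by simp [mul_comm]

/-- Along a continuous path of matrices going from Schur stability (all eigenvalues of
modulus `< 1`) to instability (an eigenvalue of modulus `> 1`), some eigenvalue must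
cross the unit circle. -/
theorem eigenvalue_crosses_unit_circle
    {n : ℕ} (a b : ℝ) (hab : a < b)
    (A : ℝ → Matrix (Fin n) (Fin n) ℂ)
    (hA : ContinuousOn A (Set.Icc a b))
    (hstart : ∀ z ∈ spectrum ℂ (A a), ‖z‖ < 1)
    (hend : ∃ z ∈ spectrum ℂ (A b), 1 < ‖z‖) :
    ∃ t ∈ Set.Icc a b, ∃ z ∈ spectrum ℂ (A t), ‖z‖ = 1 := by
  rcases Nat.eq_zero_or_pos n with hn | hn
  · subst hn
    obtain ⟨z, hz, -⟩ := hend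
    rw [spectrum.mem_iff] at hz
    haveI : Subsingleton (Matrix (Fin 0) (Fin 0) ℂ) := ⟨fun M N => by ext i; exact i.elim0⟩
    exact (hz (isUnit_of_subsingleton _)).elim
  by_contra hcon
  push_neg at hcon
  -- a uniform bound on the entries of `A t` for `t ∈ [a, b]`
  have hbdd : ∀ p : Fin n × Fin n, ∃ c : ℝ, ∀ t ∈ Set.Icc a b, ‖A t p.1 p.2‖ ≤ c := by
    intro p
    apply isCompact_Icc.exists_bound_of_continuousOn
    exact (Continuous.matrix_elem continuous_id p.1 p.2).comp_continuousOn hA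
  choose c hc using hbdd
  set C : ℝ := ∑ p : Fin n × Fin n, |c p| with hCdef
  have hCentry : ∀ t ∈ Set.Icc a b, ∀ i j, ‖A t i j‖ ≤ C := by
    intro t ht i j
    refine (hc (i, j) t ht).trans ((le_abs_self _).trans ?_)
    exact Finset.single_le_sum (f := fun p => |c p|) (fun _ _ => abs_nonneg _)
      (Finset.mem_univ (i, j))
  set Mb : ℝ := n * C + 1 with hMbdef
  have hspecbound : ∀ t ∈ Set.Icc a b, ∀ z ∈ spectrum ℂ (A t), ‖z‖ ≤ n * C :=
    fun t ht z hz => spectrum_norm_le (A t) hz C (hCentry t ht)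
  -- set up the connectedness argument on the subtype
  haveI hconn : PreconnectedSpace (Set.Icc a b) := Subtype.preconnectedSpace isPreconnected_Icc
  set B : Set.Icc a b → Matrix (Fin n) (Fin n) ℂ := fun t => A t with hBdef
  have hBcont : Continuous B := hA.restrict
  set U : Set (Set.Icc a b) := {t | ∀ z ∈ spectrum ℂ (A (t : ℝ)), ‖z‖ < 1} with hUdef
  set V : Set (Set.Icc a b) := {t | ∃ z ∈ spectrum ℂ (A (t : ℝ)), 1 < ‖z‖} with hVdef
  have hg : Continuous fun p : (Set.Icc a b) × ℂ =>
      (Matrix.scalar (Fin n) p.2 - B p.1).det := by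
    apply Continuous.matrix_det
    exact (Continuous.matrix_diagonal (continuous_pi fun _ => continuous_snd)).sub
      (hBcont.comp continuous_fst)
  -- U is open
  have hU : IsOpen U := by
    rw [isOpen_iff_forall_mem_open]
    intro t ht
    set K : Set ℂ := Metric.closedBall 0 Mb \ Metric.ball 0 1 with hK
    have hKcomp : IsCompact K := (isCompact_closedBall 0 Mb).diff Metric.isOpen_ball
    set O : Set ((Set.Icc a b) × ℂ) :=
      (fun p : (Set.Icc a b) × ℂ => (Matrix.scalar (Fin n) p.2 - B p.1).det) ⁻¹' {0}ᶜ with hOdef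
    have hOopen : IsOpen O := IsOpen.preimage hg isOpen_compl_singleton
    have hsub : {t} ×ˢ K ⊆ O := by
      rintro ⟨s, z⟩ ⟨hs, hzK⟩
      simp only [Set.mem_singleton_iff] at hs
      subst hs
      intro h0
      have hzspec : z ∈ spectrum ℂ (A (s : ℝ)) := by
        rw [mem_spectrum_iff_root, eval_charpoly_eq]; exact h0
      have hlt := ht z hzspec
      have h1 : (1 : ℝ) ≤ ‖z‖ := by
        have := hzK.2
        simp only [Metric.mem_ball, dist_zero_right, not_lt] at this
        exact this
      linarith
    obtain ⟨W1, W2, hW1, hW2, htW1, hKW2, hWsub⟩ :=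
      generalized_tube_lemma isCompact_singleton hKcomp hOopen hsub
    refine ⟨W1, ?_, hW1, htW1 rfl⟩
    intro s hs z hz
    by_contra hz1
    push_neg at hz1
    have hzK : z ∈ K := by
      constructor
      · rw [Metric.mem_closedBall, dist_zero_right]
        exact (hspecbound s s.2 z hz).trans (by rw [hMbdef]; linarith)
      · rw [Metric.mem_ball, dist_zero_right]
        exact not_lt.mpr hz1
    have hmem : (s, z) ∈ O := hWsub (Set.mk_mem_prod hs (hKW2 hzK))
    rw [hOdef, Set.mem_preimage, Set.mem_compl_iff, Set.mem_singleton_iff] at hmem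
    apply hmem
    rw [← eval_charpoly_eq]
    exact (mem_spectrum_iff_root _ _).mp hz
  -- V is open
  have hV : IsOpen V := by
    rw [isOpen_iff_forall_mem_open]
    rintro t ⟨z0, hz0, hz0abs⟩
    have h1z0 : (1 : ℝ≥0) < ‖z0‖₊ := by
      rw [← NNReal.coe_lt_coe, coe_nnnorm]
      simpa using hz0abs
    set ε : ℝ≥0 := ‖z0‖₊ - 1 with hεdef
    have hεpos : 0 < ε := tsub_pos_of_lt h1z0
    refine ⟨{s : Set.Icc a b | ‖(Matrix.scalar (Fin n) z0 - B s).det‖₊ < ε ^ n}, ?_, ?_, ?_⟩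
    · intro s hs
      obtain ⟨w, hw, hwnear⟩ := exists_spectrum_near (A (s : ℝ)) z0 ε
        (by rw [eval_charpoly_eq]; exact hs)
      refine ⟨w, hw, ?_⟩
      have htri : ‖z0‖₊ ≤ ‖z0 - w‖₊ + ‖w‖₊ := by
        simpa using nnnorm_add_le (z0 - w) w
      have hεeq : ε + 1 = ‖z0‖₊ := tsub_add_cancel_of_le h1z0.le
      have : ε + 1 < ε + ‖w‖₊ := by
        rw [hεeq]
        exact lt_of_le_of_lt htri (add_lt_add_left hwnear _)
      exact lt_of_add_lt_add_left this
    · exact isOpen_Iio.preimage ((hg.comp (continuous_id.prodMk continuous_const)).nnnorm)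
    · show ‖(Matrix.scalar (Fin n) z0 - B t).det‖₊ < ε ^ n
      have : (Matrix.scalar (Fin n) z0 - B t).det = 0 := by
        rw [← eval_charpoly_eq]
        exact (mem_spectrum_iff_root _ _).mp hz0
      rw [this]
      simpa using pow_pos hεpos n
  -- conclude via connectedness
  have hane : a ∈ Set.Icc a b := ⟨le_refl a, le_of_lt hab⟩
  have hbne : b ∈ Set.Icc a b := ⟨le_of_lt hab, le_refl b⟩
  have cover : (Set.univ : Set (Set.Icc a b)) ⊆ U ∪ V := by
    intro x _
    by_cases hx : ∃ z ∈ spectrum ℂ (A (x : ℝ)), 1 < ‖z‖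
    · exact Or.inr hx
    · push_neg at hx
      left
      intro z hz
      refine lt_of_le_of_ne (hx z hz) ?_
      have := hcon x x.2 z hz
      exact this
  have hUne : (Set.univ ∩ U).Nonempty := by
    refine ⟨⟨a, hane⟩, Set.mem_univ _, ?_⟩
    intro z hz
    exact hstart z hz
  have hVne : (Set.univ ∩ V).Nonempty := by
    obtain ⟨z, hz, hz1⟩ := hend
    exact ⟨⟨b, hbne⟩, Set.mem_univ _, ⟨z, hz, hz1⟩⟩
  obtain ⟨x, -, hxU, hxV⟩ := isPreconnected_univ U V hU hV cover hUne hVne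
  obtain ⟨z, hz, h1z⟩ := hxV
  exact absurd (hxU z hz) (not_lt.mpr h1z.le)
end

section
/- Let A be an n × n complex matrix all of whose eigenvalues have strictly negative real part. Then for every initial vector z_0 ∈ ℂ^n, the solution z(t) = exp(tA) z_0 of the linear system ż = A z tends to 0 as t → +∞; that is, the trivial equilibrium of the linear system is asymptotically stable whenever the real parts of all eigenvalues are strictly less than zero. -/
open Filter

private lemma aux_real {r : ℝ} (hr : r < 0) (j : ℕ) :
    Tendsto (fun t : ℝ => t ^ j * Real.exp (r * t)) atTop (nhds 0) := by
  have h0 : Tendsto (fun t : ℝ => -r * t) atTop atTop :=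
    Filter.tendsto_id.const_mul_atTop (by linarith)
  have h1 := (Real.tendsto_pow_mul_exp_neg_atTop_nhds_zero j).comp h0
  have h2 : Tendsto (fun t : ℝ => ((-r) ^ j)⁻¹ * ((-r * t) ^ j * Real.exp (-(-r * t))))
      atTop (nhds 0) := by
    simpa using h1.const_mul ((-r) ^ j)⁻¹
  refine h2.congr fun t => ?_
  have hrne : (-r) ^ j ≠ 0 := pow_ne_zero _ (by linarith)
  have hx : -(-r * t) = r * t := by ring
  rw [hx, mul_pow, ← mul_assoc, inv_mul_cancel_left₀ hrne]

private lemma aux_scalar {μ : ℂ} (hμ : μ.re < 0) (c : ℂ) (j : ℕ) :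
    Tendsto (fun t : ℝ => Complex.exp ((t : ℂ) * μ) * (c * (t : ℂ) ^ j)) atTop (nhds 0) := by
  rw [tendsto_zero_iff_norm_tendsto_zero]
  have hg : Tendsto (fun t : ℝ => ‖c‖ * (t ^ j * Real.exp (μ.re * t))) atTop (nhds 0) := by
    simpa using (aux_real hμ j).const_mul ‖c‖
  refine squeeze_zero' (Eventually.of_forall fun t => norm_nonneg _) ?_ hg
  filter_upwards [eventually_ge_atTop (0 : ℝ)] with t ht
  have h1 : ‖Complex.exp ((t : ℂ) * μ)‖ = Real.exp (μ.re * t) := by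
    rw [Complex.norm_exp]
    congr 1
    simp [Complex.mul_re, mul_comm]
  rw [norm_mul, norm_mul, norm_pow, h1, Complex.norm_real, Real.norm_eq_abs, abs_of_nonneg ht]
  exact le_of_eq (by ring)

open Filter in
open NormedSpace in
/-- If all eigenvalues of `A` have strictly negative real part, then every solution
`z(t) = exp(tA) z₀` of the linear system `ż = A z` tends to `0` as `t → +∞`. -/
theorem linear_system_asymptotically_stable
    {n : ℕ} (A : Matrix (Fin n) (Fin n) ℂ)
    (hA : ∀ z ∈ spectrum ℂ A, z.re < 0) :
    ∀ z₀ : Fin n → ℂ,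
      Filter.Tendsto (fun t : ℝ => (exp ((t : ℂ) • A)).mulVec z₀)
        Filter.atTop (nhds 0) := by
  letI : SeminormedRing (Matrix (Fin n) (Fin n) ℂ) := Matrix.linftyOpSemiNormedRing
  letI : NormedRing (Matrix (Fin n) (Fin n) ℂ) := Matrix.linftyOpNormedRing
  letI : NormedAlgebra ℂ (Matrix (Fin n) (Fin n) ℂ) := Matrix.linftyOpNormedAlgebra
  -- key step: the claim holds for generalized eigenvectors
  have key : ∀ μ : ℂ, μ.re < 0 → ∀ z : Fin n → ℂ, ∀ k : ℕ,
      ((A - μ • 1) ^ k).mulVec z = 0 →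
      Tendsto (fun t : ℝ => (exp ((t : ℂ) • A)).mulVec z) atTop (nhds 0) := by
    intro μ hμ z k hz
    set N : Matrix (Fin n) (Fin n) ℂ := A - μ • 1 with hN
    -- the linear map B ↦ B.mulVec z, as a continuous linear map
    let L : Matrix (Fin n) (Fin n) ℂ →ₗ[ℂ] (Fin n → ℂ) :=
      { toFun := fun B => B.mulVec z
        map_add' := fun B C => Matrix.add_mulVec B C z
        map_smul' := fun c B => Matrix.smul_mulVec c B z }
    let L' : Matrix (Fin n) (Fin n) ℂ →L[ℂ] (Fin n → ℂ) := LinearMap.toContinuousLinearMap L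
    have hsplit : ∀ t : ℝ, (exp ((t : ℂ) • A)).mulVec z
        = ∑ j ∈ Finset.range k,
            (Complex.exp ((t : ℂ) * μ) * ((j.factorial : ℂ)⁻¹ * (t : ℂ) ^ j)) •
              (N ^ j).mulVec z := by
      intro t
      have hAeq : (t : ℂ) • A = ((t : ℂ) * μ) • (1 : Matrix (Fin n) (Fin n) ℂ) + (t : ℂ) • N := by
        rw [hN]; module
      have hcomm : Commute (((t : ℂ) * μ) • (1 : Matrix (Fin n) (Fin n) ℂ)) ((t : ℂ) • N) :=
        (Commute.one_left _).smul_left _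
      have h1 : exp ((t : ℂ) • A)
          = exp (((t : ℂ) * μ) • (1 : Matrix (Fin n) (Fin n) ℂ)) * exp ((t : ℂ) • N) := by
        rw [hAeq, Matrix.exp_add_of_commute _ _ hcomm]
      have h2 : exp (((t : ℂ) * μ) • (1 : Matrix (Fin n) (Fin n) ℂ))
          = Complex.exp ((t : ℂ) * μ) • (1 : Matrix (Fin n) (Fin n) ℂ) := by
        rw [← Algebra.algebraMap_eq_smul_one, ← Algebra.algebraMap_eq_smul_one, Complex.exp_eq_exp_ℂ]
        exact (algebraMap_exp_comm (𝕂 := ℂ) (𝔸 := Matrix (Fin n) (Fin n) ℂ) _).symm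
      -- expand exp ((t:ℂ) • N) applied to z as a finite sum
      have hsummable : Summable fun j : ℕ => ((j.factorial : ℂ)⁻¹) • ((t : ℂ) • N) ^ j :=
        expSeries_summable' ((t : ℂ) • N)
      have hLapp : ∀ B : Matrix (Fin n) (Fin n) ℂ, L' B = B.mulVec z := fun B => by
        simp only [L', LinearMap.coe_toContinuousLinearMap']
        rfl
      have h3 : (exp ((t : ℂ) • N)).mulVec z
          = ∑' j : ℕ, ((j.factorial : ℂ)⁻¹ * (t : ℂ) ^ j) • (N ^ j).mulVec z := by
        rw [← hLapp, exp_eq_tsum (𝕂 := ℂ), L'.map_tsum hsummable]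
        refine tsum_congr fun j => ?_
        rw [hLapp, smul_pow, Matrix.smul_mulVec, Matrix.smul_mulVec, smul_smul]
      have h4 : (exp ((t : ℂ) • N)).mulVec z
          = ∑ j ∈ Finset.range k, ((j.factorial : ℂ)⁻¹ * (t : ℂ) ^ j) • (N ^ j).mulVec z := by
        rw [h3]
        refine tsum_eq_sum fun j hj => ?_
        have hjk : k ≤ j := by simpa using hj
        have : (N ^ j).mulVec z = 0 := by
          have hpow : N ^ j = N ^ (j - k) * N ^ k := by
            rw [← pow_add]; congr 1; omega
          rw [hpow, ← Matrix.mulVec_mulVec, hz, Matrix.mulVec_zero]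
        rw [this, smul_zero]
      rw [h1, h2, smul_mul_assoc, one_mul, Matrix.smul_mulVec, h4, Finset.smul_sum]
      refine Finset.sum_congr rfl fun j _ => ?_
      rw [smul_smul]
    simp only [hsplit]
    rw [show (0 : Fin n → ℂ) = ∑ j ∈ Finset.range k, (0 : Fin n → ℂ) by simp]
    refine tendsto_finset_sum _ fun j _ => ?_
    have := (aux_scalar hμ ((j.factorial : ℂ)⁻¹) j).smul_const ((N ^ j).mulVec z)
    simpa using this
  -- now use that generalized eigenspaces span
  intro z₀
  let S : Submodule ℂ (Fin n → ℂ) :=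
    { carrier := {z | Tendsto (fun t : ℝ => (exp ((t : ℂ) • A)).mulVec z) atTop (nhds 0)}
      add_mem' := fun {a b} ha hb => by
        have := ha.add hb
        simpa [Matrix.mulVec_add] using this
      zero_mem' := by simpa [Matrix.mulVec_zero] using tendsto_const_nhds
      smul_mem' := fun c x hx => by
        have := hx.const_smul c
        simpa [Matrix.mulVec_smul] using this }
  suffices hS : S = ⊤ by
    have : z₀ ∈ S := hS ▸ Submodule.mem_top
    exact this
  rw [eq_top_iff, ← Module.End.iSup_maxGenEigenspace_eq_top (Matrix.toLinAlgEquiv' A)]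
  refine iSup_le fun μ => ?_
  intro z hzmem
  rcases eq_or_ne z 0 with rfl | hz0
  · exact S.zero_mem
  · -- μ is an eigenvalue, hence in the spectrum of A
    obtain ⟨k, hk⟩ := (Module.End.mem_maxGenEigenspace _ _ _).mp hzmem
    have hspec : μ ∈ spectrum ℂ A := by
      have hgen : Module.End.HasGenEigenvalue (Matrix.toLinAlgEquiv' A) μ k := by
        intro hbot
        apply hz0
        have hmem : z ∈ Module.End.genEigenspace (Matrix.toLinAlgEquiv' A) μ (k : ℕ∞) := by
          rw [Module.End.mem_genEigenspace_nat]
          exact hk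
        rw [hbot] at hmem
        simpa using hmem
      have := (Module.End.hasEigenvalue_of_hasGenEigenvalue hgen).mem_spectrum
      rwa [show spectrum ℂ (Matrix.toLinAlgEquiv' A) = spectrum ℂ A from
        AlgEquiv.spectrum_eq (Matrix.toLinAlgEquiv' (R := ℂ) (n := Fin n)) A] at this
    have hmat : ((A - μ • 1) ^ k).mulVec z = 0 := by
      have h0 : ((Matrix.toLinAlgEquiv' A - μ • 1) ^ k) z = 0 := hk
      have heq : (Matrix.toLinAlgEquiv' A - μ • 1) ^ k
          = Matrix.toLinAlgEquiv' ((A - μ • 1) ^ k) := by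
        rw [map_pow, map_sub, ← Algebra.algebraMap_eq_smul_one,
          ← Algebra.algebraMap_eq_smul_one, AlgEquiv.commutes]
      rw [heq] at h0
      simpa only [Matrix.toLinAlgEquiv'_apply] using h0
    exact key μ (hA μ hspec) z k hmat
end
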